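/- There exists a positive integer n₀ such that for every integer n ≥ n₀, f(3n)² + 2·f(3n)·f(2n) > f(3n−1)·f(3n+1) + f(2n−1)·f(3n+1). -/

import Mathlib

/-!
A non-empty subset of `{1, …, m}` whose gcd is `d ≥ 2` consists of multiples of `d`, so there
are at most `1 + m · 2^(m/2)` subsets that are not relatively prime and `f m = 2^m (1 - O(m 2^(-m/2)))`.
With `X = 2^n` the left-hand side is therefore `X^6 + 2 X^5` up to terms of order `n X^(9/2)`, while
the trivial bound `f m ≤ 2^m` makes the right-hand side at most `X^6 + X^5`.
-/

/-- `f n` is the number of relatively prime subsets of `{1, 2, ..., n}`,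
i.e. subsets `A` with `gcd A = 1` (such subsets are automatically nonempty). -/
def f (n : ℕ) : ℕ :=
  ((Finset.Icc 1 n).powerset.filter (fun A => A.gcd id = 1)).card

open Finset

lemma f_le_two_pow (m : ℕ) : f m ≤ 2 ^ m :=
  (card_filter_le _ _).trans_eq (by simp)

lemma f_mul_le_pow (k n : ℕ) : f (k * n) ≤ (2 ^ n) ^ k :=
  (f_le_two_pow _).trans_eq (by rw [mul_comm, pow_mul])

lemma f_mul_f_le_pow {i j k n : ℕ} (h : i + j = k * n) : f i * f j ≤ (2 ^ n) ^ k := by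
  rw [← pow_mul, mul_comm n, ← h, pow_add]
  exact Nat.mul_le_mul (f_le_two_pow i) (f_le_two_pow j)

lemma f_add_card_gcd_ne_one (m : ℕ) :
    f m + #{A ∈ (Icc 1 m).powerset | A.gcd id ≠ 1} = 2 ^ m := by
  rw [f, card_filter_add_card_filter_not]
  simp

lemma card_multiples_le {m d : ℕ} (hd : 2 ≤ d) : #{x ∈ Icc 1 m | d ∣ x} ≤ m / 2 := by
  rw [show Icc 1 m = Ioc 0 m from Icc_add_one_left_eq_Ioc 0 m, Nat.Ioc_filter_dvd_card_eq_div]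
  exact Nat.div_le_div_left hd two_pos

lemma filter_gcd_ne_one_subset (m : ℕ) :
    {A ∈ (Icc 1 m).powerset | A.gcd id ≠ 1} ⊆
      insert ∅ ((Icc 2 m).biUnion fun d => {x ∈ Icc 1 m | d ∣ x}.powerset) := by
  intro A hA
  simp only [mem_filter, mem_powerset] at hA
  obtain ⟨hAm, hgcd⟩ := hA
  obtain rfl | ⟨x, hx⟩ := A.eq_empty_or_nonempty
  · exact mem_insert_self _ _
  have hxm := mem_Icc.mp (hAm hx)
  have hdvd : A.gcd id ∣ x := gcd_dvd hx
  have hpos : 0 < A.gcd id := Nat.pos_of_dvd_of_pos hdvd hxm.1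
  refine mem_insert_of_mem (mem_biUnion.mpr ⟨A.gcd id, mem_Icc.mpr ⟨by omega, ?_⟩, ?_⟩)
  · exact (Nat.le_of_dvd hxm.1 hdvd).trans hxm.2
  · exact mem_powerset.mpr fun y hy => mem_filter.mpr ⟨hAm hy, gcd_dvd hy⟩

lemma card_filter_gcd_ne_one_le (m : ℕ) :
    #{A ∈ (Icc 1 m).powerset | A.gcd id ≠ 1} ≤ 1 + (m - 1) * 2 ^ (m / 2) := by
  calc _ ≤ #(insert ∅ ((Icc 2 m).biUnion fun d => {x ∈ Icc 1 m | d ∣ x}.powerset)) :=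
        card_le_card (filter_gcd_ne_one_subset m)
    _ ≤ 1 + ∑ d ∈ Icc 2 m, #{x ∈ Icc 1 m | d ∣ x}.powerset :=
        (card_insert_le _ _).trans (by rw [add_comm]; gcongr; exact card_biUnion_le)
    _ ≤ 1 + #(Icc 2 m) * 2 ^ (m / 2) := by
        gcongr
        refine sum_le_card_nsmul _ _ _ fun d hd => ?_
        rw [card_powerset]
        exact Nat.pow_le_pow_right two_pos (card_multiples_le (mem_Icc.mp hd).1)
    _ = 1 + (m - 1) * 2 ^ (m / 2) := by rw [Nat.card_Icc]; congr 2

lemma two_pow_le_f_add {m : ℕ} (hm : 0 < m) : 2 ^ m ≤ f m + m * 2 ^ (m / 2) := by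
  have := f_add_card_gcd_ne_one m
  have := card_filter_gcd_ne_one_le m
  have : 1 ≤ 2 ^ (m / 2) := Nat.one_le_two_pow
  obtain ⟨k, rfl⟩ : ∃ k, m = k + 1 := ⟨m - 1, by omega⟩
  simp only [Nat.add_sub_cancel, add_mul, one_mul] at *
  omega

lemma pow_le_f_mul_add {k n : ℕ} (hkn : 0 < k * n) :
    (2 ^ n) ^ k ≤ f (k * n) + k * n * 2 ^ (k * n / 2) :=
  (two_pow_le_f_add hkn).trans_eq' (by rw [mul_comm, pow_mul])

lemma pow_six_add_pow_five_lt {X a b E F : ℕ} (hX : 0 < X) (ha : X ^ 3 ≤ a + E) (ha' : a ≤ X ^ 3)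
    (hb : X ^ 2 ≤ b + F) (hb' : b ≤ X ^ 2) (hE : 8 * E ≤ X ^ 2) (hF : 8 * F ≤ X ^ 2) :
    X ^ 6 + X ^ 5 < a ^ 2 + 2 * a * b := by
  have hsq : X ^ 6 ≤ a ^ 2 + 2 * X ^ 3 * E + E ^ 2 := by
    calc X ^ 6 = (X ^ 3) ^ 2 := by ring
      _ ≤ (a + E) ^ 2 := by gcongr
      _ = a ^ 2 + 2 * a * E + E ^ 2 := by ring
      _ ≤ _ := by gcongr
  have hmul : X ^ 5 ≤ a * b + X ^ 3 * F + E * X ^ 2 + E * F := by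
    calc X ^ 5 = X ^ 3 * X ^ 2 := by ring
      _ ≤ (a + E) * (b + F) := by gcongr
      _ = a * b + a * F + E * b + E * F := by ring
      _ ≤ _ := by gcongr
  nlinarith [pow_pos hX 4, pow_pos hX 5]

lemma mul_le_two_pow_half {n : ℕ} (hn : 20 ≤ n) : 24 * n ≤ 2 ^ (n / 2) := by
  suffices ∀ k, 10 ≤ k → 48 * k + 24 ≤ 2 ^ k by have := this (n / 2) (by omega); omega
  intro k hk
  induction k, hk using Nat.le_induction with
  | base => norm_num
  | succ k _ ih => rw [pow_succ]; omega

lemma eight_mul_three_mul_two_pow_le {n : ℕ} (hn : 20 ≤ n) :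
    8 * (3 * n * 2 ^ (3 * n / 2)) ≤ (2 ^ n) ^ 2 :=
  calc _ ≤ 2 ^ (n / 2) * 2 ^ (3 * n / 2) := by
        rw [← mul_assoc, ← mul_assoc]; gcongr; linarith [mul_le_two_pow_half hn]
    _ ≤ 2 ^ (n * 2) := by rw [← pow_add]; exact Nat.pow_le_pow_right two_pos (by omega)
    _ = _ := pow_mul 2 n 2

lemma eight_mul_two_mul_two_pow_le {n : ℕ} (hn : 20 ≤ n) :
    8 * (2 * n * 2 ^ (2 * n / 2)) ≤ (2 ^ n) ^ 2 := by
  rw [show 2 * n / 2 = n by omega, sq, ← mul_assoc, ← mul_assoc]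
  gcongr
  calc 8 * 2 * n ≤ 24 * n := by omega
    _ ≤ 2 ^ (n / 2) := mul_le_two_pow_half hn
    _ ≤ 2 ^ n := Nat.pow_le_pow_right two_pos (Nat.div_le_self n 2)

theorem stmt_16 :
    ∃ n₀ : ℕ, 0 < n₀ ∧ ∀ n : ℕ, n₀ ≤ n →
      f (3 * n) ^ 2 + 2 * f (3 * n) * f (2 * n) >
        f (3 * n - 1) * f (3 * n + 1) + f (2 * n - 1) * f (3 * n + 1) := by
  refine ⟨20, by norm_num, fun n hn => ?_⟩
  have hmain := pow_six_add_pow_five_lt (by positivity)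
    (pow_le_f_mul_add (k := 3) (by omega)) (f_mul_le_pow 3 n)
    (pow_le_f_mul_add (k := 2) (by omega)) (f_mul_le_pow 2 n)
    (eight_mul_three_mul_two_pow_le hn) (eight_mul_two_mul_two_pow_le hn)
  have h6 := f_mul_f_le_pow (i := 3 * n - 1) (j := 3 * n + 1) (k := 6) (n := n) (by omega)
  have h5 := f_mul_f_le_pow (i := 2 * n - 1) (j := 3 * n + 1) (k := 5) (n := n) (by omega)
  omega
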